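/- Let each fᵢ: ℝ^d → ℝ be differentiable, convex and Lᵢ-smooth with L_max = max_i Lᵢ, assume the interpolation regime holds with common minimizer x⋆, set f = (1/n)∑ᵢ fᵢ and M^γ = (1/n)∑ᵢ M_{fᵢ}^γ for γ > 0. Then for all x ∈ ℝ^d: M^γ(x) − M^γ(x⋆) ≥ (1/(1+γL_max)) (f(x) − f(x⋆)). -/

import Mathlib

/-- The Moreau envelope of a real-valued function `f` with parameter `γ`. -/
noncomputable def moreau {d : ℕ} (γ : ℝ) (f : EuclideanSpace ℝ (Fin d) → ℝ)
    (x : EuclideanSpace ℝ (Fin d)) : ℝ :=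
  ⨅ z, (f z + (1 / (2 * γ)) * ‖z - x‖ ^ 2)

/-! For one convex `L`-smooth `f` with `∇f(x⋆) = 0`, every proximal candidate `z` satisfies
`f(z) + ‖z − x‖²/(2γ) ≥ f(x⋆) + (f(x) − f(x⋆))/(1 + γL)`: the descent lemma bounds `f(x)` by
`f(z) + ‖∇f(z)‖‖z − x‖ + L‖z − x‖²/2`, Young's inequality splits the cross term, and the bound
`‖∇f(z)‖² ≤ 2L(f(z) − f(x⋆))` absorbs the gradient. Taking the infimum over `z` and using
`M^γ(x⋆) ≤ f(x⋆)` gives the inequality for each `fᵢ`; since `Lᵢ ≤ L_max` and `fᵢ(x) ≥ fᵢ(x⋆)`,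
averaging over `i` finishes. -/

open Set

section InnerProductSpace

variable {F : Type*} [NormedAddCommGroup F] [InnerProductSpace ℝ F] [CompleteSpace F]
  {f : F → ℝ} {g : F → F} {L : ℝ}

theorem HasGradientAt.hasDerivAt_comp_add_smul {g' x v : F} {t : ℝ}
    (hf : HasGradientAt f g' (x + t • v)) :
    HasDerivAt (fun s : ℝ => f (x + s • v)) (inner ℝ g' v) t := by
  have hline : HasDerivAt (fun s : ℝ => x + s • v) v t := by
    simpa using ((hasDerivAt_id t).smul_const v).const_add x
  have h := hf.hasFDerivAt.comp_hasDerivAt t hline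
  simp only [InnerProductSpace.toDual_apply_apply] at h
  exact h

theorem ConvexOn.add_inner_le_of_hasGradientAt (hconv : ConvexOn ℝ univ f) {g' x : F}
    (hf : HasGradientAt f g' x) (z : F) :
    f x + inner ℝ g' (z - x) ≤ f z := by
  have hline : ConvexOn ℝ univ fun t : ℝ => f (x + t • (z - x)) := by
    simpa [Function.comp_def, AffineMap.lineMap_apply, add_comm]
      using hconv.comp_affineMap (AffineMap.lineMap x z)
  have hderiv := (show HasGradientAt f g' (x + (0 : ℝ) • (z - x)) by simpa using hf)
    |>.hasDerivAt_comp_add_smul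
  have := hline.le_slope_of_hasDerivAt (mem_univ 0) (mem_univ 1) one_pos hderiv
  simp only [slope_def_field, one_smul, add_sub_cancel, zero_smul, add_zero, sub_zero,
    div_one] at this
  linarith

theorem ConvexOn.le_of_hasGradientAt_zero (hconv : ConvexOn ℝ univ f) {x : F}
    (hf : HasGradientAt f 0 x) (z : F) : f x ≤ f z := by
  simpa using hconv.add_inner_le_of_hasGradientAt hf z

/-- The descent lemma. -/
theorem le_add_inner_add_of_gradient_lipschitz
    (hg : ∀ p, HasGradientAt f (g p) p) (hlip : ∀ a b, ‖g a - g b‖ ≤ L * ‖a - b‖) (x y : F) :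
    f y ≤ f x + inner ℝ (g x) (y - x) + L / 2 * ‖y - x‖ ^ 2 := by
  set v := y - x
  -- `φ` has nonpositive derivative on `t ≥ 0` by the Lipschitz bound, so `φ 1 ≤ φ 0`
  set φ : ℝ → ℝ := fun t => f (x + t • v) - t * inner ℝ (g x) v - L / 2 * t ^ 2 * ‖v‖ ^ 2
  have hφ (t : ℝ) :
      HasDerivAt φ (inner ℝ (g (x + t • v)) v - inner ℝ (g x) v - L * t * ‖v‖ ^ 2) t := by
    refine ((((hg (x + t • v)).hasDerivAt_comp_add_smul.sub
      ((hasDerivAt_id t).mul_const (inner ℝ (g x) v))).sub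
      (((hasDerivAt_pow 2 t).const_mul (L / 2)).mul_const (‖v‖ ^ 2)))).congr_deriv ?_
    simp only [Nat.cast_ofNat]; ring
  have hanti : AntitoneOn φ (Ici 0) := by
    refine antitoneOn_of_hasDerivWithinAt_nonpos (convex_Ici 0)
      (fun t _ => (hφ t).continuousAt.continuousWithinAt) (fun t _ => (hφ t).hasDerivWithinAt) ?_
    intro t ht
    rw [interior_Ici, mem_Ioi] at ht
    have hgap : ‖g (x + t • v) - g x‖ ≤ L * (t * ‖v‖) := by
      simpa [norm_smul, abs_of_pos ht] using hlip (x + t • v) x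
    have hinner := real_inner_le_norm (g (x + t • v) - g x) v
    rw [inner_sub_left] at hinner
    nlinarith [norm_nonneg v]
  have h01 := hanti self_mem_Ici (zero_le_one' ℝ) zero_le_one
  simp only [φ, v, one_smul, add_sub_cancel, zero_smul, add_zero, one_mul, one_pow, mul_one,
    zero_mul, sub_zero, mul_zero, zero_pow two_ne_zero] at h01
  linarith

theorem sq_norm_gradient_le_of_gradient_lipschitz (hL : 0 < L) (hconv : ConvexOn ℝ univ f)
    (hg : ∀ p, HasGradientAt f (g p) p) (hlip : ∀ a b, ‖g a - g b‖ ≤ L * ‖a - b‖)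
    {xs : F} (hmin : g xs = 0) (z : F) :
    ‖g z‖ ^ 2 ≤ 2 * L * (f z - f xs) := by
  -- a gradient step of length `1 / L` from `z` cannot get below `f xs`
  have hdesc := le_add_inner_add_of_gradient_lipschitz hg hlip z (z - L⁻¹ • g z)
  have hlow := hconv.le_of_hasGradientAt_zero (hmin ▸ hg xs) (z - L⁻¹ • g z)
  simp only [sub_sub_cancel_left, inner_neg_right, real_inner_smul_right,
    real_inner_self_eq_norm_sq, norm_neg, norm_smul, mul_pow, Real.norm_eq_abs, abs_inv,
    abs_of_pos hL] at hdesc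
  have hstep : L / 2 * (L⁻¹ ^ 2 * ‖g z‖ ^ 2) = L⁻¹ / 2 * ‖g z‖ ^ 2 := by
    field_simp
  have : L⁻¹ * ‖g z‖ ^ 2 ≤ 2 * (f z - f xs) := by linarith
  rwa [inv_mul_le_iff₀ hL, ← mul_assoc, mul_comm L 2] at this

theorem add_mul_sub_le_of_gradient_lipschitz {γ : ℝ} (hγ : 0 < γ) (hL : 0 < L)
    (hconv : ConvexOn ℝ univ f) (hg : ∀ p, HasGradientAt f (g p) p)
    (hlip : ∀ a b, ‖g a - g b‖ ≤ L * ‖a - b‖) {xs : F} (hmin : g xs = 0) (x z : F) :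
    f xs + 1 / (1 + γ * L) * (f x - f xs) ≤ f z + 1 / (2 * γ) * ‖z - x‖ ^ 2 := by
  set A := f z - f xs
  set G := ‖g z‖
  set r := ‖z - x‖
  have hA : 0 ≤ A := sub_nonneg.2 (hconv.le_of_hasGradientAt_zero (hmin ▸ hg xs) z)
  have hPL : G ^ 2 ≤ 2 * L * A := sq_norm_gradient_le_of_gradient_lipschitz hL hconv hg hlip hmin z
  have hdesc : f x - f xs ≤ A + G * r + L / 2 * r ^ 2 := by
    have hfx := le_add_inner_add_of_gradient_lipschitz hg hlip z x
    have hinner := real_inner_le_norm (g z) (x - z)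
    rw [norm_sub_rev x z] at hfx hinner
    linarith
  -- Young's inequality `2γGr ≤ γ²G² + r²`, then the PL bound on `G²`.
  have hmain : 2 * γ * (f x - f xs) ≤ (2 * γ * A + r ^ 2) * (1 + γ * L) := by
    nlinarith [sq_nonneg (γ * G - r), mul_le_mul_of_nonneg_left hPL (sq_nonneg γ)]
  suffices 1 / (1 + γ * L) * (f x - f xs) ≤ A + 1 / (2 * γ) * r ^ 2 by linarith
  rw [one_div_mul_eq_div, div_le_iff₀ (by positivity)]
  calc f x - f xs = 2 * γ * (f x - f xs) / (2 * γ) := by field_simp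
    _ ≤ (2 * γ * A + r ^ 2) * (1 + γ * L) / (2 * γ) := by gcongr
    _ = (A + 1 / (2 * γ) * r ^ 2) * (1 + γ * L) := by field_simp

end InnerProductSpace

section Moreau

variable {d : ℕ} {γ L : ℝ} {f : EuclideanSpace ℝ (Fin d) → ℝ}
  {g : EuclideanSpace ℝ (Fin d) → EuclideanSpace ℝ (Fin d)}

theorem moreau_le (hγ : 0 ≤ γ) (hf : BddBelow (range f)) (x : EuclideanSpace ℝ (Fin d)) :
    moreau γ f x ≤ f x := by
  obtain ⟨m, hm⟩ := hf
  have hbdd : BddBelow (range fun z => f z + 1 / (2 * γ) * ‖z - x‖ ^ 2) := by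
    refine ⟨m, ?_⟩
    rintro _ ⟨z, rfl⟩
    have := hm (mem_range_self z)
    have : 0 ≤ 1 / (2 * γ) * ‖z - x‖ ^ 2 := by positivity
    linarith
  calc moreau γ f x ≤ f x + 1 / (2 * γ) * ‖x - x‖ ^ 2 := ciInf_le hbdd x
    _ = f x := by simp

theorem mul_sub_le_moreau_sub_moreau (hγ : 0 < γ) (hL : 0 < L) (hconv : ConvexOn ℝ univ f)
    (hg : ∀ p, HasGradientAt f (g p) p) (hlip : ∀ a b, ‖g a - g b‖ ≤ L * ‖a - b‖)
    {xs : EuclideanSpace ℝ (Fin d)} (hmin : g xs = 0) (x : EuclideanSpace ℝ (Fin d)) :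
    1 / (1 + γ * L) * (f x - f xs) ≤ moreau γ f x - moreau γ f xs := by
  have hxs : moreau γ f xs ≤ f xs :=
    moreau_le hγ.le ⟨f xs, forall_mem_range.2 (hconv.le_of_hasGradientAt_zero (hmin ▸ hg xs))⟩ xs
  have hx : f xs + 1 / (1 + γ * L) * (f x - f xs) ≤ moreau γ f x :=
    le_ciInf (add_mul_sub_le_of_gradient_lipschitz hγ hL hconv hg hlip hmin x)
  linarith

end Moreau

theorem stmt11_general {d n : ℕ} (γ : ℝ) (hγ : 0 < γ)
    (f : Fin n → EuclideanSpace ℝ (Fin d) → ℝ)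
    (g : Fin n → EuclideanSpace ℝ (Fin d) → EuclideanSpace ℝ (Fin d))
    (L : Fin n → ℝ) (Lmax : ℝ) (hL : ∀ i, 0 < L i)
    (hLmax : ∀ i, L i ≤ Lmax)
    (hconv : ∀ i, ConvexOn ℝ Set.univ (f i))
    (hgrad : ∀ i x, HasGradientAt (f i) (g i x) x)
    (hlip : ∀ i x y, ‖g i x - g i y‖ ≤ L i * ‖x - y‖)
    (xs : EuclideanSpace ℝ (Fin d)) (hint : ∀ i, g i xs = 0) :
    ∀ x, (1 / (n : ℝ)) * ∑ i, moreau γ (f i) x - (1 / (n : ℝ)) * ∑ i, moreau γ (f i) xs ≥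
      (1 / (1 + γ * Lmax)) *
        ((1 / (n : ℝ)) * ∑ i, f i x - (1 / (n : ℝ)) * ∑ i, f i xs) := by
  intro x
  have key (i : Fin n) :
      1 / (1 + γ * Lmax) * (f i x - f i xs) ≤ moreau γ (f i) x - moreau γ (f i) xs :=
    calc 1 / (1 + γ * Lmax) * (f i x - f i xs)
        ≤ 1 / (1 + γ * L i) * (f i x - f i xs) := by
          have := hL i
          gcongr
          · exact sub_nonneg.2 ((hconv i).le_of_hasGradientAt_zero (hint i ▸ hgrad i xs) x)
          · exact hLmax i
      _ ≤ moreau γ (f i) x - moreau γ (f i) xs :=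
          mul_sub_le_moreau_sub_moreau hγ (hL i) (hconv i) (hgrad i) (hlip i) (hint i) x
  rw [ge_iff_le, ← mul_sub, ← mul_sub, ← Finset.sum_sub_distrib, ← Finset.sum_sub_distrib,
    mul_left_comm, Finset.mul_sum]
  gcongr with i
  exact key i

/-- Let each `fᵢ : ℝ^d → ℝ` be differentiable, convex and `Lᵢ`-smooth with
`L_max = max_i Lᵢ`, assume the interpolation regime holds with common minimizer `x⋆`,
set `f = (1/n)∑ᵢ fᵢ` and `M^γ = (1/n)∑ᵢ M_{fᵢ}^γ` for `γ > 0`. Then for all `x`: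
`M^γ(x) − M^γ(x⋆) ≥ (1/(1+γL_max)) (f(x) − f(x⋆))`. -/
theorem stmt11 {d n : ℕ} (hn : 0 < n) (γ : ℝ) (hγ : 0 < γ)
    (f : Fin n → EuclideanSpace ℝ (Fin d) → ℝ)
    (g : Fin n → EuclideanSpace ℝ (Fin d) → EuclideanSpace ℝ (Fin d))
    (L : Fin n → ℝ) (Lmax : ℝ) (hL : ∀ i, 0 < L i)
    (hLmax : ∀ i, L i ≤ Lmax) (hLmax' : ∃ i, L i = Lmax)
    (hconv : ∀ i, ConvexOn ℝ Set.univ (f i))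
    (hgrad : ∀ i x, HasGradientAt (f i) (g i x) x)
    (hlip : ∀ i x y, ‖g i x - g i y‖ ≤ L i * ‖x - y‖)
    (xs : EuclideanSpace ℝ (Fin d)) (hint : ∀ i, g i xs = 0) :
    ∀ x, (1 / (n : ℝ)) * ∑ i, moreau γ (f i) x - (1 / (n : ℝ)) * ∑ i, moreau γ (f i) xs ≥
      (1 / (1 + γ * Lmax)) *
        ((1 / (n : ℝ)) * ∑ i, f i x - (1 / (n : ℝ)) * ∑ i, f i xs) :=
  stmt11_general γ hγ f g L Lmax hL hLmax hconv hgrad hlip xs hint
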